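/- arXiv:2405.11634 — 2 statements merged into one kernel-verified Lean document; each statement's English description precedes it below -/
import Mathlib

section
/- If the operator pencil P(λ) = λE − A, with E bounded and A closed and densely defined, has a right singular polynomial, then it has a right approximate polynomial sequence. -/
open Filter Topology

noncomputable section

variable {X Y : Type*}
  [NormedAddCommGroup X] [InnerProductSpace ℂ X] [CompleteSpace X]
  [NormedAddCommGroup Y] [InnerProductSpace ℂ Y] [CompleteSpace Y]

/-- Evaluation of the `X`-valued polynomial `p(λ) = ∑_{j=0}^k λ^j a_j` at `lam`. -/
def polyEval {Z : Type*} [AddCommGroup Z] [Module ℂ Z] (a : ℕ → Z) (k : ℕ) (lam : ℂ) : Z :=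
  ∑ j ∈ Finset.range (k + 1), lam ^ j • a j

/-- Evaluation of the reversal `rev p(λ) = ∑_{j=0}^k λ^j a_{k-j}` at `lam`. -/
def revEval {Z : Type*} [AddCommGroup Z] [Module ℂ Z] (a : ℕ → Z) (k : ℕ) (lam : ℂ) : Z :=
  ∑ j ∈ Finset.range (k + 1), lam ^ j • a (k - j)

/-- Application of a partially defined operator, extended by `0` outside its domain. -/
noncomputable def pap {W Z : Type*} [NormedAddCommGroup W] [InnerProductSpace ℂ W]
    [NormedAddCommGroup Z] [InnerProductSpace ℂ Z] (A : W →ₗ.[ℂ] Z) (v : W) : Z :=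
  haveI := Classical.dec (v ∈ A.domain)
  if h : v ∈ A.domain then A ⟨v, h⟩ else 0

/-- The pencil `λE - A` (with `E` bounded) has a right singular polynomial: a nonzero
`X`-valued polynomial `p` with `p(λ0) ∈ D(A)` and `(λ0 E - A) p(λ0) = 0` for all `λ0`. -/
def HasRightSingularPoly (E : X →L[ℂ] Y) (A : X →ₗ.[ℂ] Y) : Prop :=
  ∃ (k : ℕ) (a : ℕ → X), (∃ j ≤ k, a j ≠ 0) ∧
    ∀ lam : ℂ, polyEval a k lam ∈ A.domain ∧
      lam • E (polyEval a k lam) - pap A (polyEval a k lam) = 0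

/-- The polynomials `p_n(λ) = ∑_{j=0}^{k n} λ^j (a n j)` form a right approximate
polynomial sequence for the pencil `λE - A` with `E` bounded. -/
def IsRAPS (E : X →L[ℂ] Y) (A : X →ₗ.[ℂ] Y) (k : ℕ → ℕ) (a : ℕ → ℕ → X) : Prop :=
  (∀ (n : ℕ) (lam : ℂ),
      polyEval (a n) (k n) lam ∈ A.domain ∧ revEval (a n) (k n) lam ∈ A.domain) ∧
  ∀ lam : ℂ,
    (∀ n, polyEval (a n) (k n) lam ≠ 0) ∧
    (∀ n, revEval (a n) (k n) lam ≠ 0) ∧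
    ¬ Tendsto (fun n => ‖polyEval (a n) (k n) lam‖) atTop (𝓝 (0 : ℝ)) ∧
    ¬ Tendsto (fun n => ‖revEval (a n) (k n) lam‖) atTop (𝓝 (0 : ℝ)) ∧
    Tendsto (fun n => lam • E (polyEval (a n) (k n) lam) -
      pap A (polyEval (a n) (k n) lam)) atTop (𝓝 (0 : Y)) ∧
    Tendsto (fun n => lam • pap A (revEval (a n) (k n) lam) -
      E (revEval (a n) (k n) lam)) atTop (𝓝 (0 : Y))

/-!
Take a nonzero singular polynomial `p` of least degree `k`. Since `p(λ) ∈ D(A)` for all `λ`,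
its coefficients lie in `D(A)` (a polynomial vanishing modulo `D(A)` at infinitely many points
has all its coefficients in `D(A)`), so one may work with the pencil of linear maps
`D(A) → Y`. Minimality forces `p` to have no zeros: if `p(λ₀) = 0`, synthetic division writes
`p(λ) = (λ - λ₀) q(λ)`, and `q` is singular of degree `k - 1` (cancel `λ - λ₀` off `λ₀`, then
use continuity at `λ₀`). It also forces the leading coefficient to be nonzero, so
`rev p(λ) = λ^k p(1/λ)` has no zeros either and `(λA - E) rev p(λ) = 0`, again by continuity at
`λ = 0`. The constant sequence `p_n = p` is then a right approximate polynomial sequence.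
-/

open Finset

section PolyEval

variable {V W : Type*} [AddCommGroup V] [Module ℂ V] [AddCommGroup W] [Module ℂ W]

lemma polyEval_congr {a b : ℕ → V} {k : ℕ} (h : ∀ j ≤ k, a j = b j) (l : ℂ) :
    polyEval a k l = polyEval b k l :=
  sum_congr rfl fun j hj => by rw [h j (Nat.lt_succ_iff.mp (mem_range.mp hj))]

lemma polyEval_succ (a : ℕ → V) (k : ℕ) (l : ℂ) :
    polyEval a (k + 1) l = polyEval a k l + l ^ (k + 1) • a (k + 1) :=
  sum_range_succ _ _

lemma map_polyEval (f : V →ₗ[ℂ] W) (a : ℕ → V) (k : ℕ) (l : ℂ) :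
    f (polyEval a k l) = polyEval (f ∘ a) k l := by
  simp [polyEval]

lemma revEval_eq_polyEval (a : ℕ → V) (k : ℕ) (l : ℂ) :
    revEval a k l = polyEval (fun j => a (k - j)) k l :=
  rfl

lemma revEval_zero (a : ℕ → V) (k : ℕ) : revEval a k 0 = a k := by
  rw [revEval, sum_eq_single 0 (fun j _ hj => by simp [zero_pow hj]) (by simp)]
  simp

lemma revEval_eq_smul_polyEval_inv (a : ℕ → V) (k : ℕ) {l : ℂ} (hl : l ≠ 0) :
    revEval a k l = l ^ k • polyEval a k l⁻¹ := by
  rw [revEval, polyEval, smul_sum, ← sum_range_reflect]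
  refine sum_congr rfl fun j hj => ?_
  have hjk : j ≤ k := Nat.lt_succ_iff.mp (mem_range.mp hj)
  rw [Nat.add_sub_cancel, Nat.sub_sub_self hjk, smul_smul, inv_pow, ← pow_sub₀ l hl hjk]

lemma revEval_ne_zero {a : ℕ → V} {k : ℕ} (hk : a k ≠ 0) (h : ∀ l, polyEval a k l ≠ 0)
    (l : ℂ) : revEval a k l ≠ 0 := by
  rcases eq_or_ne l 0 with rfl | hl
  · rwa [revEval_zero]
  · rw [revEval_eq_smul_polyEval_inv a k hl]
    exact smul_ne_zero (pow_ne_zero k hl) (h l⁻¹)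

open Polynomial in
lemma eq_zero_of_polyEval_eq_zero {a : ℕ → V} {k : ℕ} {s : Set ℂ} (hs : s.Infinite)
    (h : ∀ l ∈ s, polyEval a k l = 0) : ∀ j ≤ k, a j = 0 := by
  intro j hj
  refine (Module.forall_dual_apply_eq_zero_iff ℂ (a j)).mp fun φ => ?_
  set q : ℂ[X] := ∑ i ∈ range (k + 1), C (φ (a i)) * X ^ i
  have hq : q = 0 := by
    refine q.eq_zero_of_infinite_isRoot (hs.mono fun l hl => ?_)
    have hφ : φ (polyEval a k l) = 0 := by rw [h l hl, map_zero]
    rw [polyEval, map_sum] at hφ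
    simp only [IsRoot, q, eval_finsetSum, eval_mul, eval_C, eval_pow, eval_X]
    simpa [mul_comm] using hφ
  have := congrArg (coeff · j) hq
  simpa [q, finsetSum_coeff, coeff_C_mul_X_pow, Nat.lt_succ_iff.mpr hj] using this

lemma mem_of_polyEval_mem {a : ℕ → V} {k : ℕ} {s : Set ℂ} (hs : s.Infinite)
    (M : Submodule ℂ V) (h : ∀ l ∈ s, polyEval a k l ∈ M) : ∀ j ≤ k, a j ∈ M := by
  have := eq_zero_of_polyEval_eq_zero (a := M.mkQ ∘ a) (k := k) hs fun l hl => by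
    rw [← map_polyEval, Submodule.mkQ_apply, Submodule.Quotient.mk_eq_zero]
    exact h l hl
  simpa [Submodule.Quotient.mk_eq_zero] using this

end PolyEval

section Division

variable {V : Type*} [AddCommGroup V] [Module ℂ V]

def synthDiv (a : ℕ → V) (k : ℕ) (l₀ : ℂ) (m : ℕ) : V :=
  ∑ j ∈ Ioc m k, l₀ ^ (j - 1 - m) • a j

lemma polyEval_sub_polyEval (a : ℕ → V) (k : ℕ) (l l₀ : ℂ) :
    polyEval a (k + 1) l - polyEval a (k + 1) l₀ =
      (l - l₀) • polyEval (synthDiv a (k + 1) l₀) k l := by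
  have hgeom : ∀ j, l ^ j - l₀ ^ j = (l - l₀) * ∑ m ∈ range j, l ^ m * l₀ ^ (j - 1 - m) :=
    fun j => by rw [mul_comm, geom_sum₂_mul]
  calc polyEval a (k + 1) l - polyEval a (k + 1) l₀
      = ∑ j ∈ range (k + 2), ∑ m ∈ range j, ((l - l₀) * (l ^ m * l₀ ^ (j - 1 - m))) • a j := by
        simp only [polyEval, ← sum_sub_distrib, ← sub_smul, hgeom, mul_sum, sum_smul]
    _ = ∑ m ∈ range (k + 1), ∑ j ∈ Ioc m (k + 1), ((l - l₀) * (l ^ m * l₀ ^ (j - 1 - m))) • a j :=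
        sum_comm' fun j m => by simp only [mem_range, mem_Ioc]; omega
    _ = (l - l₀) • polyEval (synthDiv a (k + 1) l₀) k l := by
        simp only [polyEval, synthDiv, smul_sum, smul_smul]

end Division

lemma continuous_polyEval {W : Type*} [AddCommGroup W] [Module ℂ W] [TopologicalSpace W]
    [ContinuousAdd W] [ContinuousSMul ℂ W] (a : ℕ → W) (k : ℕ) : Continuous (polyEval a k) :=
  continuous_finsetSum _ fun j _ => (continuous_pow j).smul continuous_const

section Pencil

variable {D Z : Type*} [AddCommGroup D] [Module ℂ D] [AddCommGroup Z] [Module ℂ Z]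
  {F G : D →ₗ[ℂ] Z} {b : ℕ → D} {k : ℕ}

variable (F G) in
def IsSingularPoly (b : ℕ → D) (k : ℕ) : Prop :=
  ∀ l : ℂ, l • F (polyEval b k l) = G (polyEval b k l)

lemma IsSingularPoly.leading_ne_zero (hb : IsSingularPoly F G b k) (hne : ∃ j ≤ k, b j ≠ 0)
    (hmin : ∀ m < k, ∀ c : ℕ → D, IsSingularPoly F G c m → ∀ j ≤ m, c j = 0) : b k ≠ 0 := by
  intro hbk
  obtain ⟨j, hjk, hbj⟩ := hne
  cases k with
  | zero => exact hbj (Nat.le_zero.mp hjk ▸ hbk)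
  | succ k =>
    have hlow : IsSingularPoly F G b k := fun l => by
      simpa only [polyEval_succ, hbk, smul_zero, add_zero] using hb l
    have hjk' : j ≤ k := Nat.le_of_lt_succ (lt_of_le_of_ne hjk (by rintro rfl; exact hbj hbk))
    exact hbj (hmin k k.lt_succ_self b hlow j hjk')

variable [TopologicalSpace Z] [IsTopologicalAddGroup Z] [ContinuousSMul ℂ Z] [T2Space Z]

lemma IsSingularPoly.of_forall_ne (l₀ : ℂ)
    (h : ∀ l ≠ l₀, l • F (polyEval b k l) = G (polyEval b k l)) : IsSingularPoly F G b k := by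
  have hcont : Continuous fun l => l • F (polyEval b k l) - G (polyEval b k l) := by
    simp only [map_polyEval]
    exact (continuous_id.smul (continuous_polyEval _ k)).sub (continuous_polyEval _ k)
  have hzero := hcont.ext_on (dense_compl_singleton l₀) continuous_const
    fun l hl => sub_eq_zero.mpr (h l hl)
  exact fun l => sub_eq_zero.mp (congrFun hzero l)

lemma IsSingularPoly.rev (hb : IsSingularPoly F G b k) :
    IsSingularPoly G F (fun j => b (k - j)) k :=
  of_forall_ne 0 fun l hl => by
    rw [← revEval_eq_polyEval, revEval_eq_smul_polyEval_inv b k hl, map_smul, map_smul,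
      ← hb l⁻¹, smul_smul, smul_smul, mul_assoc, mul_left_comm, mul_inv_cancel₀ hl, mul_one]

lemma IsSingularPoly.synthDiv_of_root {l₀ : ℂ} (hb : IsSingularPoly F G b (k + 1))
    (hroot : polyEval b (k + 1) l₀ = 0) : IsSingularPoly F G (synthDiv b (k + 1) l₀) k :=
  of_forall_ne l₀ fun l hl => by
    have hfac := polyEval_sub_polyEval b k l l₀
    rw [hroot, sub_zero] at hfac
    have := hb l
    rw [hfac, map_smul, map_smul, smul_comm] at this
    exact smul_right_injective Z (sub_ne_zero.mpr hl) this

lemma IsSingularPoly.polyEval_ne_zero (hb : IsSingularPoly F G b k) (hne : ∃ j ≤ k, b j ≠ 0)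
    (hmin : ∀ m < k, ∀ c : ℕ → D, IsSingularPoly F G c m → ∀ j ≤ m, c j = 0) (l₀ : ℂ) :
    polyEval b k l₀ ≠ 0 := by
  intro hroot
  obtain ⟨j, hjk, hbj⟩ := hne
  cases k with
  | zero => exact hbj (by simpa [polyEval, Nat.le_zero.mp hjk] using hroot)
  | succ k =>
    have hq := hmin k k.lt_succ_self _ (hb.synthDiv_of_root hroot)
    have hvanish : ∀ l ∈ Set.univ, polyEval b (k + 1) l = 0 := fun l _ => by
      have hfac := polyEval_sub_polyEval b k l l₀
      rw [hroot, sub_zero, polyEval_congr hq] at hfac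
      simpa [polyEval] using hfac
    exact hbj (eq_zero_of_polyEval_eq_zero Set.infinite_univ hvanish j hjk)

variable (F G) in
theorem exists_isSingularPoly_leading_ne_zero_polyEval_ne_zero
    (h : ∃ k b, (∃ j ≤ k, b j ≠ 0) ∧ IsSingularPoly F G b k) :
    ∃ k b, IsSingularPoly F G b k ∧ b k ≠ 0 ∧ ∀ l, polyEval b k l ≠ 0 := by
  classical
  obtain ⟨b, hne, hb⟩ := Nat.find_spec h
  have hmin : ∀ m < Nat.find h, ∀ c : ℕ → D, IsSingularPoly F G c m → ∀ j ≤ m, c j = 0 := by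
    intro m hm c hc
    by_contra! hc'
    exact Nat.find_min h hm ⟨c, hc', hc⟩
  exact ⟨_, b, hb, hb.leading_ne_zero hne hmin, hb.polyEval_ne_zero hne hmin⟩

end Pencil

section Operator

variable {V W : Type*} [NormedAddCommGroup V] [InnerProductSpace ℂ V]
  [NormedAddCommGroup W] [InnerProductSpace ℂ W] {E : V →L[ℂ] W} {A : V →ₗ.[ℂ] W}

lemma pap_coe (A : V →ₗ.[ℂ] W) (x : A.domain) : pap A x = A x :=
  dif_pos x.2

lemma HasRightSingularPoly.exists_isSingularPoly (h : HasRightSingularPoly E A) :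
    ∃ (k : ℕ) (b : ℕ → A.domain), (∃ j ≤ k, b j ≠ 0) ∧
      IsSingularPoly ((E : V →ₗ[ℂ] W) ∘ₗ A.domain.subtype) A.toFun b k := by
  classical
  obtain ⟨k, a, ⟨j, hjk, haj⟩, hsing⟩ := h
  have hdom := mem_of_polyEval_mem Set.infinite_univ A.domain fun l _ => (hsing l).1
  let b : ℕ → A.domain := fun j => if h : a j ∈ A.domain then ⟨a j, h⟩ else 0
  have hb : ∀ j ≤ k, (b j : V) = a j := fun j hj => by simp [b, hdom j hj]
  have heval : ∀ l, ((polyEval b k l : A.domain) : V) = polyEval a k l := fun l =>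
    (map_polyEval A.domain.subtype b k l).trans (polyEval_congr hb l)
  refine ⟨k, b, ⟨j, hjk, fun hbj => haj ?_⟩, fun l => ?_⟩
  · rw [← hb j hjk, hbj, ZeroMemClass.coe_zero]
  · have := (hsing l).2
    rw [← heval, pap_coe, sub_eq_zero] at this
    exact this

lemma isRAPS_const_of_isSingularPoly {b : ℕ → A.domain} {k : ℕ}
    (hb : IsSingularPoly ((E : V →ₗ[ℂ] W) ∘ₗ A.domain.subtype) A.toFun b k)
    (hk : b k ≠ 0) (hne : ∀ l, polyEval b k l ≠ 0) :
    IsRAPS E A (fun _ => k) (fun _ j => b j) := by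
  have hp : ∀ l, polyEval (fun j => (b j : V)) k l = polyEval b k l := fun l =>
    (map_polyEval A.domain.subtype b k l).symm
  have hr : ∀ l, revEval (fun j => (b j : V)) k l = revEval b k l := fun l =>
    (map_polyEval A.domain.subtype (fun j => b (k - j)) k l).symm
  refine ⟨fun _ l => by simp only [hp, hr, SetLike.coe_mem, and_self], fun l => ?_⟩
  simp only [hp, hr, pap_coe, ne_eq, ZeroMemClass.coe_eq_zero, tendsto_const_nhds_iff,
    norm_eq_zero, sub_eq_zero]
  exact ⟨fun _ => hne l, fun _ => revEval_ne_zero hk hne l, hne l, revEval_ne_zero hk hne l,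
    hb l, hb.rev l⟩

end Operator

theorem stmt_8_general (E : X →L[ℂ] Y) (A : X →ₗ.[ℂ] Y)
    (h : HasRightSingularPoly E A) :
    ∃ (k : ℕ → ℕ) (a : ℕ → ℕ → X), IsRAPS E A k a := by
  obtain ⟨k, b, hb, hb0, hne⟩ :=
    exists_isSingularPoly_leading_ne_zero_polyEval_ne_zero _ _ h.exists_isSingularPoly
  exact ⟨_, _, isRAPS_const_of_isSingularPoly hb hb0 hne⟩

/-- If the pencil `λE - A`, with `E` bounded and `A` closed and densely defined, has a
right singular polynomial, then it has a right approximate polynomial sequence. -/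
theorem stmt_8 (E : X →L[ℂ] Y) (A : X →ₗ.[ℂ] Y)
    (hdense : Dense (A.domain : Set X)) (hclosed : IsClosed (A.graph : Set (X × Y)))
    (h : HasRightSingularPoly E A) :
    ∃ (k : ℕ → ℕ) (a : ℕ → ℕ → X), IsRAPS E A k a :=
  stmt_8_general E A h
end
end

section
/- If the operator pencil P(λ) = λE − A has a right approximate polynomial sequence, then every λ0 ∈ ℂ is an approximate singularity of P, and additionally ∞ is an approximate singularity, i.e., there exist unit vectors y_n ∈ D(A) with E y_n → 0 as n → ∞. -/
/-! Approximate singularities come from normalising: for each `λ₀` the vectors `pₙ(λ₀)` have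
norms that do not tend to `0`, so along a subsequence they stay above some `ε > 0`, and
dividing by the norm keeps `(λ₀E - A)(pₙ(λ₀)/‖pₙ(λ₀)‖) → 0`. The point `∞` is handled the same
way with `rev pₙ(0)`, for which the reversal condition at `λ = 0` reads `E (rev pₙ(0)) → 0`. -/

open Filter Topology

noncomputable section

variable {X Y : Type*}
  [NormedAddCommGroup X] [InnerProductSpace ℂ X] [CompleteSpace X]
  [NormedAddCommGroup Y] [InnerProductSpace ℂ Y] [CompleteSpace Y]

/-- `lam` is an approximate singularity of the pencil `P(λ) = λE - A`:
there are unit vectors `xₙ ∈ D(A)` with `(λE - A)xₙ → 0`. -/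
def IsApproxSingularity (E : X →L[ℂ] Y) (A : X →ₗ.[ℂ] Y) (lam : ℂ) : Prop :=
  ∃ x : ℕ → A.domain, (∀ n, ‖(x n : X)‖ = 1) ∧
    Tendsto (fun n => lam • E ((x n : X)) - A (x n)) atTop (𝓝 (0 : Y))

omit [CompleteSpace X] [CompleteSpace Y] in
theorem pap_of_mem {A : X →ₗ.[ℂ] Y} {v : X} (hv : v ∈ A.domain) : pap A v = A ⟨v, hv⟩ :=
  dif_pos hv

theorem exists_pos_frequently_le_norm_of_not_tendsto_zero {E : Type*} [SeminormedAddCommGroup E]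
    {v : ℕ → E} (hv : ¬ Tendsto (fun n => ‖v n‖) atTop (𝓝 0)) :
    ∃ ε > 0, ∃ᶠ n in atTop, ε ≤ ‖v n‖ := by
  simpa only [Metric.tendsto_nhds, dist_zero_right, norm_norm, not_forall, not_lt,
    Filter.not_eventually, exists_prop] using hv

theorem LinearMap.exists_norm_eq_one_tendsto_zero {𝕜 V W : Type*} [RCLike 𝕜]
    [NormedAddCommGroup V] [NormedSpace 𝕜 V] [SeminormedAddCommGroup W] [NormedSpace 𝕜 W]
    (T : V →ₗ[𝕜] W) {v : ℕ → V} (hv : ¬ Tendsto (fun n => ‖v n‖) atTop (𝓝 0))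
    (hT : Tendsto (fun n => T (v n)) atTop (𝓝 0)) :
    ∃ u : ℕ → V, (∀ n, ‖u n‖ = 1) ∧ Tendsto (fun n => T (u n)) atTop (𝓝 0) := by
  obtain ⟨ε, hε, hfreq⟩ := exists_pos_frequently_le_norm_of_not_tendsto_zero hv
  obtain ⟨φ, hφ, hφε⟩ := extraction_of_frequently_atTop hfreq
  have hne : ∀ n, v (φ n) ≠ 0 := fun n => norm_pos_iff.mp (hε.trans_le (hφε n))
  refine ⟨fun n => (‖v (φ n)‖⁻¹ : 𝕜) • v (φ n), fun n => norm_smul_inv_norm (hne n), ?_⟩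
  have hbound : ∀ n, ‖T ((‖v (φ n)‖⁻¹ : 𝕜) • v (φ n))‖ ≤ ε⁻¹ * ‖T (v (φ n))‖ := fun n => by
    rw [T.map_smul, norm_smul, norm_inv, RCLike.norm_ofReal, abs_norm]
    gcongr
    exact hφε n
  refine squeeze_zero_norm hbound ?_
  simpa using ((hT.comp hφ.tendsto_atTop).norm).const_mul ε⁻¹

theorem stmt_9_general (E : X →L[ℂ] Y) (A : X →ₗ.[ℂ] Y)
    (h : ∃ (k : ℕ → ℕ) (a : ℕ → ℕ → X), IsRAPS E A k a) :
    (∀ lam0 : ℂ, IsApproxSingularity E A lam0) ∧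
    (∃ y : ℕ → A.domain, (∀ n, ‖(y n : X)‖ = 1) ∧
      Tendsto (fun n => E ((y n : X))) atTop (𝓝 (0 : Y))) := by
  obtain ⟨k, a, hdom, hraps⟩ := h
  refine ⟨fun lam => ?_, ?_⟩
  · obtain ⟨-, -, hp, -, hPp, -⟩ := hraps lam
    let p : ℕ → A.domain := fun n => ⟨polyEval (a n) (k n) lam, (hdom n lam).1⟩
    exact (lam • E.toLinearMap ∘ₗ A.domain.subtype - A.toFun).exists_norm_eq_one_tendsto_zero
      (v := p) hp (by simp only [pap_of_mem (hdom _ lam).1] at hPp; exact hPp)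
  · obtain ⟨-, -, -, hr, -, hRr⟩ := hraps 0
    let r : ℕ → A.domain := fun n => ⟨revEval (a n) (k n) 0, (hdom n 0).2⟩
    exact (E.toLinearMap ∘ₗ A.domain.subtype).exists_norm_eq_one_tendsto_zero
      (v := r) hr (by simpa using hRr.neg)

/-- If the pencil `λE - A` has a right approximate polynomial sequence, then every
`λ0 ∈ ℂ` is an approximate singularity, and additionally `∞` is an approximate
singularity: there are unit vectors `yₙ ∈ D(A)` with `E yₙ → 0`. -/
theorem stmt_9 (E : X →L[ℂ] Y) (A : X →ₗ.[ℂ] Y)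
    (hdense : Dense (A.domain : Set X)) (hclosed : IsClosed (A.graph : Set (X × Y)))
    (h : ∃ (k : ℕ → ℕ) (a : ℕ → ℕ → X), IsRAPS E A k a) :
    (∀ lam0 : ℂ, IsApproxSingularity E A lam0) ∧
    (∃ y : ℕ → A.domain, (∀ n, ‖(y n : X)‖ = 1) ∧
      Tendsto (fun n => E ((y n : X))) atTop (𝓝 (0 : Y))) :=
  stmt_9_general E A h
end
end
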